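/- Let 𝔄 = (A, Att) be a SETAF, P_𝔄 its associated NLP, and 𝔄_{P_𝔄} the SETAF associated with P_𝔄. Then 𝔄 = 𝔄_{P_𝔄}. -/
import Mathlib


/-- A rule of a normal logic program:
`head ← bodyPos, not bodyNeg`. -/
structure Rule (α : Type) where
  head : α
  bodyPos : Finset α
  bodyNeg : Finset α
deriving DecidableEq

/-- A normal logic program (NLP): a finite set of rules. -/
abbrev NLP (α : Type) := Finset (Rule α)

variable {α : Type} [DecidableEq α]

/-- The atoms occurring in a rule. -/
def Rule.atoms (r : Rule α) : Finset α :=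
  insert r.head (r.bodyPos ∪ r.bodyNeg)

/-- The Herbrand base of a program: all atoms occurring in it. -/
def HB (P : NLP α) : Finset α := P.sup Rule.atoms

/-- A three-valued interpretation, given by its sets of true and false atoms. -/
structure Interp (α : Type) where
  T : Set α
  F : Set α

/-- `I` is a 3-valued interpretation over the Herbrand base `H`. -/
def IsInterp (H : Finset α) (I : Interp α) : Prop :=
  I.T ⊆ ↑H ∧ I.F ⊆ ↑H ∧ Disjoint I.T I.F

/-- A rule of a positive program obtained as a reduct; `hasU` records whether
the special atom `u` (undefined in every interpretation) occurs in its body. -/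
structure PosRule (α : Type) where
  head : α
  bodyPos : Finset α
  hasU : Prop

/-- The reduct `P/I`: delete every rule whose negative body meets `I.T`,
delete each `not b` with `b ∈ I.F`, and replace the remaining negative
literals by the special atom `u`. -/
def reduct (P : NLP α) (I : Interp α) : Set (PosRule α) :=
  { q | ∃ r ∈ P, (∀ b ∈ r.bodyNeg, b ∉ I.T) ∧
        q.head = r.head ∧ q.bodyPos = r.bodyPos ∧
        (q.hasU ↔ ∃ b ∈ r.bodyNeg, b ∉ I.F) }

/-- The `Ψ` operator of a positive program `Q` relative to the Herbrand base
`H`; the special atom `u` is neither true nor false in any interpretation. -/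
def PsiOp (H : Finset α) (Q : Set (PosRule α)) (J : Interp α) : Interp α where
  T := { c | c ∈ H ∧ ∃ q ∈ Q, q.head = c ∧ ¬ q.hasU ∧ ∀ a ∈ q.bodyPos, a ∈ J.T }
  F := { c | c ∈ H ∧ ∀ q ∈ Q, q.head = c → ∃ a ∈ q.bodyPos, a ∈ J.F }

/-- Iteration of `Ψ` starting from `⟨∅, H⟩`. -/
def PsiIter (H : Finset α) (Q : Set (PosRule α)) : ℕ → Interp α
  | 0 => ⟨∅, ↑H⟩
  | n + 1 => PsiOp H Q (PsiIter H Q n)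

/-- `Ω_P(I)`: the least three-valued model of the reduct `P/I`,
obtained as the `ω`-iteration of `Ψ`. -/
def OmegaOp (H : Finset α) (P : NLP α) (I : Interp α) : Interp α where
  T := ⋃ n, (PsiIter H (reduct P I) n).T
  F := ⋂ n, (PsiIter H (reduct P I) n).F

/-- `I` is a partial stable model of `P` (over Herbrand base `H`). -/
def IsPSModel (H : Finset α) (P : NLP α) (I : Interp α) : Prop :=
  IsInterp H I ∧ OmegaOp H P I = I

/-- Well-founded model: a partial stable model with `⊆`-minimal true part. -/
def IsWFModel (H : Finset α) (P : NLP α) (I : Interp α) : Prop :=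
  IsPSModel H P I ∧ ∀ J, IsPSModel H P J → ¬ J.T ⊂ I.T

/-- Regular model: a partial stable model with `⊆`-maximal true part. -/
def IsRegularModel (H : Finset α) (P : NLP α) (I : Interp α) : Prop :=
  IsPSModel H P I ∧ ∀ J, IsPSModel H P J → ¬ I.T ⊂ J.T

/-- Stable model: a partial stable model with `T ∪ F = H`. -/
def IsStableModel (H : Finset α) (P : NLP α) (I : Interp α) : Prop :=
  IsPSModel H P I ∧ I.T ∪ I.F = ↑H

/-- L-stable model: a partial stable model with `⊆`-maximal `T ∪ F`. -/
def IsLStableModel (H : Finset α) (P : NLP α) (I : Interp α) : Prop :=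
  IsPSModel H P I ∧ ∀ J, IsPSModel H P J → ¬ (I.T ∪ I.F) ⊂ (J.T ∪ J.F)

/-- `IsStatement P c V R`: there is a statement of `P` with conclusion `c`,
vulnerabilities `V` and rules `R`.  A statement is built from a rule
`r = c ← a₁,…,a_m, not b₁,…,not b_n ∈ P` together with statements `sᵢ` for the
positive body atoms `aᵢ` (with `r` not among their rules); its vulnerabilities
are `Vul(s₁) ∪ … ∪ Vul(s_m) ∪ {b₁,…,b_n}` and its rules are
`Rules(s₁) ∪ … ∪ Rules(s_m) ∪ {r}`. -/
inductive IsStatement (P : NLP α) : α → Finset α → Finset (Rule α) → Prop where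
  | mk (r : Rule α) (hr : r ∈ P) (v : α → Finset α) (ρ : α → Finset (Rule α))
      (hsub : ∀ a ∈ r.bodyPos, IsStatement P a (v a) (ρ a))
      (hnr : ∀ a ∈ r.bodyPos, r ∉ ρ a) :
      IsStatement P r.head (r.bodyPos.biUnion v ∪ r.bodyNeg)
        (insert r (r.bodyPos.biUnion ρ))

/-- `c` is an argument of `P`: it is the conclusion of some statement. -/
def IsArg (P : NLP α) (c : α) : Prop := ∃ V R, IsStatement P c V R

open Classical in
/-- The set `A_P` of arguments of `P`. -/
noncomputable def argsOf (P : NLP α) : Finset α := (HB P).filter (IsArg P)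

/-- `B` meets every vulnerability set of `a` in `P`. -/
def HitsVul (P : NLP α) (B : Finset α) (a : α) : Prop :=
  ∀ V R, IsStatement P a V R → ∃ b ∈ B, b ∈ V

/-- A SETAF: a finite set of arguments and an attack relation between
finite sets of arguments and arguments. -/
structure SETAF (α : Type) where
  args : Finset α
  att : Finset α → α → Prop

/-- Well-formedness of a SETAF: attackers are nonempty sets of arguments
attacking arguments, and attacking sets are `⊆`-minimal. -/
def SETAF.Wf (S : SETAF α) : Prop :=
  (∀ B a, S.att B a → B.Nonempty ∧ B ⊆ S.args ∧ a ∈ S.args) ∧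
  (∀ B a, S.att B a → ∀ B', B' ⊂ B → ¬ S.att B' a)

/-- The SETAF `𝔄_P` associated with an NLP `P`: its arguments are the
conclusions of the statements of `P`, and `B` attacks `a` iff `B` is a
`⊆`-minimal set of arguments meeting every vulnerability set of `a`. -/
noncomputable def setafOf (P : NLP α) : SETAF α where
  args := argsOf P
  att := fun B a =>
    B ⊆ argsOf P ∧ a ∈ argsOf P ∧ HitsVul P B a ∧ ∀ B', B' ⊂ B → ¬ HitsVul P B' a

/-- Labels for arguments. -/
inductive Lab : Type
  | inn | out | und
deriving DecidableEq

/-- `in(L)`. -/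
def labIn (S : SETAF α) (L : α → Lab) : Set α := { a | a ∈ S.args ∧ L a = Lab.inn }

/-- `out(L)`. -/
def labOut (S : SETAF α) (L : α → Lab) : Set α := { a | a ∈ S.args ∧ L a = Lab.out }

/-- `undec(L)`. -/
def labUnd (S : SETAF α) (L : α → Lab) : Set α := { a | a ∈ S.args ∧ L a = Lab.und }

/-- Admissible labelling. -/
def AdmissibleLab (S : SETAF α) (L : α → Lab) : Prop :=
  ∀ a ∈ S.args,
    (L a = Lab.inn → ∀ B, S.att B a → ∃ b ∈ B, L b = Lab.out) ∧
    (L a = Lab.out → ∃ B, S.att B a ∧ ∀ b ∈ B, L b = Lab.inn)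

/-- Complete labelling. -/
def CompleteLab (S : SETAF α) (L : α → Lab) : Prop :=
  AdmissibleLab S L ∧
  ∀ a ∈ S.args, L a = Lab.und →
    (∃ B, S.att B a ∧ ∀ b ∈ B, L b ≠ Lab.out) ∧
    (∀ B, S.att B a → ∃ b ∈ B, L b ≠ Lab.inn)

/-- Grounded labelling: complete with `⊆`-minimal `in(L)`. -/
def GroundedLab (S : SETAF α) (L : α → Lab) : Prop :=
  CompleteLab S L ∧ ∀ L', CompleteLab S L' → ¬ labIn S L' ⊂ labIn S L

/-- Preferred labelling: complete with `⊆`-maximal `in(L)`. -/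
def PreferredLab (S : SETAF α) (L : α → Lab) : Prop :=
  CompleteLab S L ∧ ∀ L', CompleteLab S L' → ¬ labIn S L ⊂ labIn S L'

/-- Stable labelling: complete with `undec(L) = ∅`. -/
def StableLab (S : SETAF α) (L : α → Lab) : Prop :=
  CompleteLab S L ∧ labUnd S L = ∅

/-- Semi-stable labelling: complete with `⊆`-minimal `undec(L)`. -/
def SemiStableLab (S : SETAF α) (L : α → Lab) : Prop :=
  CompleteLab S L ∧ ∀ L', CompleteLab S L' → ¬ labUnd S L' ⊂ labUnd S L

/-- `L2I_P`: the interpretation associated with a labelling of `𝔄_P`. -/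
def L2I (P : NLP α) (L : α → Lab) : Interp α where
  T := { c | c ∈ HB P ∧ c ∈ argsOf P ∧ L c = Lab.inn }
  F := { c | c ∈ HB P ∧ (c ∉ argsOf P ∨ (c ∈ argsOf P ∧ L c = Lab.out)) }

open Classical in
/-- `I2L`: the labelling associated with an interpretation (meaningful on
the arguments). -/
noncomputable def I2L (I : Interp α) : α → Lab := fun c =>
  if c ∈ I.T then Lab.inn else if c ∈ I.F then Lab.out else Lab.und

/-- `L2I_𝔄`: the interpretation `⟨in(L), out(L)⟩` associated with a labelling
of a SETAF `𝔄`. -/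
def L2Iset (S : SETAF α) (L : α → Lab) : Interp α := ⟨labIn S L, labOut S L⟩

/-- `V` meets every attacker of `a` in `S`. -/
def HitsAtt (S : SETAF α) (a : α) (V : Finset α) : Prop :=
  ∀ B, S.att B a → ∃ b ∈ B, b ∈ V

/-- `V ∈ V_a`: a `⊆`-minimal set of arguments meeting every attacker of `a`. -/
def MemVa (S : SETAF α) (a : α) (V : Finset α) : Prop :=
  V ⊆ S.args ∧ HitsAtt S a V ∧ ∀ V', V' ⊂ V → ¬ HitsAtt S a V'

open Classical in
/-- The NLP `P_𝔄` associated with a SETAF `𝔄`: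
`{ a ← not b₁,…,not b_n | a ∈ A, {b₁,…,b_n} ∈ V_a }`. -/
noncomputable def nlpOf (S : SETAF α) : NLP α :=
  ((S.args ×ˢ S.args.powerset).filter (fun p => MemVa S p.1 p.2)).image
    (fun p => { head := p.1, bodyPos := ∅, bodyNeg := p.2 })

/-- Redundancy-Free Atomic Logic Program: every rule is atomic (no positive
body), every atom is a head, and no rule's negative body strictly contains
that of another rule with the same head. -/
def IsRFALP (P : NLP α) : Prop :=
  (∀ r ∈ P, r.bodyPos = ∅) ∧
  HB P = P.image Rule.head ∧
  ∀ r ∈ P, ∀ r' ∈ P, r'.head = r.head → ¬ r'.bodyNeg ⊂ r.bodyNeg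

/-- Unfolding: replace a rule `c ← a, a₁,…,a_m, not b₁,…,not b_n` by all rules
obtained by resolving `a` against the rules of the program with head `a`. -/
def StepU (P₁ P₂ : NLP α) : Prop :=
  ∃ r ∈ P₁, ∃ a ∈ r.bodyPos,
    P₂ = P₁.erase r ∪
      (P₁.filter (fun r' => r'.head = a)).image
        (fun r' => { head := r.head,
                     bodyPos := r'.bodyPos ∪ r.bodyPos.erase a,
                     bodyNeg := r'.bodyNeg ∪ r.bodyNeg })

/-- Elimination of tautologies: delete a rule whose head occurs in its
positive body. -/
def StepT (P₁ P₂ : NLP α) : Prop :=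
  ∃ r ∈ P₁, r.head ∈ r.bodyPos ∧ P₂ = P₁.erase r

/-- Positive reduction: delete a literal `not b` from the body of a rule,
where `b` is not the head of any rule of the program. -/
def StepP (P₁ P₂ : NLP α) : Prop :=
  ∃ r ∈ P₁, ∃ b ∈ r.bodyNeg, (∀ r' ∈ P₁, r'.head ≠ b) ∧
    P₂ = insert { head := r.head, bodyPos := r.bodyPos,
                  bodyNeg := r.bodyNeg.erase b } (P₁.erase r)

/-- Elimination of non-minimal rules: delete a rule subsumed by a distinct
rule with the same head and smaller bodies. -/
def StepM (P₁ P₂ : NLP α) : Prop :=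
  ∃ r ∈ P₁, ∃ r' ∈ P₁, r ≠ r' ∧ r'.head = r.head ∧
    r'.bodyPos ⊆ r.bodyPos ∧ r'.bodyNeg ⊆ r.bodyNeg ∧ P₂ = P₁.erase r

/-- `↦_UTPM`: the union of the four transformations. -/
def StepUTPM (P₁ P₂ : NLP α) : Prop :=
  StepU P₁ P₂ ∨ StepT P₁ P₂ ∨ StepP P₁ P₂ ∨ StepM P₁ P₂

/-- `P` is irreducible w.r.t. `↦_UTPM`: there is no `P' ≠ P` with
`P ↦_UTPM P'`. -/
def UTPMIrreducible (P : NLP α) : Prop :=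
  ¬ ∃ P', StepUTPM P P' ∧ P' ≠ P


private lemma exists_min {Q : Finset α → Prop} :
    ∀ V : Finset α, Q V → ∃ W, W ⊆ V ∧ Q W ∧ ∀ W', W' ⊂ W → ¬ Q W' := by
  intro V
  induction V using Finset.strongInduction with
  | _ V ih =>
    intro hQ
    by_cases h : ∃ W', W' ⊂ V ∧ Q W'
    · obtain ⟨W', hW', hQ'⟩ := h
      obtain ⟨W, hWsub, hQW, hmin⟩ := ih W' hW' hQ'
      exact ⟨W, hWsub.trans hW'.subset, hQW, hmin⟩
    · exact ⟨V, Finset.Subset.refl V, hQ, fun W' hW' hQ' => h ⟨W', hW', hQ'⟩⟩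

private lemma mem_nlpOf (S : SETAF α) (r : Rule α) :
    r ∈ nlpOf S ↔ r.bodyPos = ∅ ∧ r.head ∈ S.args ∧ MemVa S r.head r.bodyNeg := by
  classical
  simp only [nlpOf, Finset.mem_image, Finset.mem_filter, Finset.mem_product,
    Finset.mem_powerset]
  constructor
  · rintro ⟨⟨x, v⟩, ⟨⟨hx, hv⟩, hm⟩, rfl⟩
    exact ⟨rfl, hx, hm⟩
  · rintro ⟨hp, hx, hm⟩
    refine ⟨(r.head, r.bodyNeg), ⟨⟨hx, hm.1⟩, hm⟩, ?_⟩
    cases r with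
    | mk h bp bn => simp_all

private lemma isStatement_iff (S : SETAF α) (c : α) (V : Finset α) :
    (∃ R, IsStatement (nlpOf S) c V R) ↔ c ∈ S.args ∧ MemVa S c V := by
  constructor
  · rintro ⟨R, hst⟩
    cases hst with
    | mk r hr v ρ hsub hnr =>
      rw [mem_nlpOf] at hr
      obtain ⟨hp, hx, hm⟩ := hr
      exact ⟨hx, by simpa [hp] using hm⟩
  · rintro ⟨hc, hm⟩
    have hr : ({ head := c, bodyPos := ∅, bodyNeg := V } : Rule α) ∈ nlpOf S := by
      rw [mem_nlpOf]; exact ⟨rfl, hc, hm⟩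
    have h := IsStatement.mk _ hr (fun _ => ∅) (fun _ => ∅)
      (by simp) (by simp)
    exact ⟨_, by simpa using h⟩

private lemma memVa_exists (S : SETAF α) (hS : S.Wf) {a : α} (_ : a ∈ S.args) :
    ∃ V, MemVa S a V := by
  have hargs : HitsAtt S a S.args := by
    intro A hA
    obtain ⟨b, hb⟩ := (hS.1 A a hA).1
    exact ⟨b, hb, (hS.1 A a hA).2.1 hb⟩
  obtain ⟨W, hWsub, hQW, hmin⟩ := exists_min (Q := HitsAtt S a) S.args hargs
  exact ⟨W, hWsub, hQW, hmin⟩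

private lemma argsOf_nlpOf (S : SETAF α) (hS : S.Wf) : argsOf (nlpOf S) = S.args := by
  classical
  ext a
  simp only [argsOf, Finset.mem_filter, HB, Finset.mem_sup]
  constructor
  · rintro ⟨-, hV, hR, hst⟩
    exact ((isStatement_iff S a hV).1 ⟨hR, hst⟩).1
  · intro ha
    obtain ⟨V, hV⟩ := memVa_exists S hS ha
    have hr : ({ head := a, bodyPos := ∅, bodyNeg := V } : Rule α) ∈ nlpOf S := by
      rw [mem_nlpOf]; exact ⟨rfl, ha, hV⟩
    refine ⟨⟨_, hr, by simp [Rule.atoms]⟩, ?_⟩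
    obtain ⟨R, hst⟩ := (isStatement_iff S a V).2 ⟨ha, hV⟩
    exact ⟨V, R, hst⟩

private lemma hitsVul_iff (S : SETAF α) (B : Finset α) {a : α} (ha : a ∈ S.args) :
    HitsVul (nlpOf S) B a ↔ ∀ V, MemVa S a V → ∃ b ∈ B, b ∈ V := by
  constructor
  · intro h V hV
    obtain ⟨R, hst⟩ := (isStatement_iff S a V).2 ⟨ha, hV⟩
    exact h V R hst
  · intro h V R hst
    exact h V ((isStatement_iff S a V).1 ⟨R, hst⟩).2

private lemma dtrans_of_att (S : SETAF α) {B : Finset α} {a : α} (hB : S.att B a) :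
    ∀ V, MemVa S a V → ∃ b ∈ B, b ∈ V :=
  fun _ hV => hV.2.1 B hB

private lemma claim2 (S : SETAF α) (hS : S.Wf) {B : Finset α} {a : α} (hB : S.att B a)
    (B' : Finset α) (hB' : B' ⊂ B) : ¬ ∀ V, MemVa S a V → ∃ b ∈ B', b ∈ V := by
  intro hD
  obtain ⟨x, hxB, hxB'⟩ := Finset.exists_of_ssubset hB'
  have hBargs : B ⊆ S.args := (hS.1 B a hB).2.1
  have hU : HitsAtt S a ((S.args \ B) ∪ {x}) := by
    intro A hA
    by_contra hc
    push_neg at hc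
    have hAB : A ⊂ B := by
      have hsub : A ⊆ B.erase x := by
        intro b hb
        have hb1 := hc b hb
        have hbargs : b ∈ S.args := (hS.1 A a hA).2.1 hb
        simp only [Finset.mem_union, Finset.mem_sdiff, Finset.mem_singleton, not_or,
          not_and, not_not] at hb1
        exact Finset.mem_erase.2 ⟨hb1.2, hb1.1 hbargs⟩
      exact hsub.trans_ssubset (Finset.erase_ssubset hxB)
    exact hS.2 B a hB A hAB hA
  have hUargs : (S.args \ B) ∪ {x} ⊆ S.args := by
    intro b hb
    rcases Finset.mem_union.1 hb with h | h
    · exact (Finset.mem_sdiff.1 h).1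
    · rw [Finset.mem_singleton.1 h]; exact hBargs hxB
  obtain ⟨W, hWsub, hQW, hmin⟩ := exists_min (Q := HitsAtt S a) _ hU
  obtain ⟨b, hbB', hbW⟩ := hD W ⟨hWsub.trans hUargs, hQW, hmin⟩
  have hbU := hWsub hbW
  rcases Finset.mem_union.1 hbU with h | h
  · exact (Finset.mem_sdiff.1 h).2 (hB'.subset hbB')
  · exact hxB' (Finset.mem_singleton.1 h ▸ hbB')

private lemma claim3 (S : SETAF α) (hS : S.Wf) {B : Finset α} {a : α}
    (hD : ∀ V, MemVa S a V → ∃ b ∈ B, b ∈ V)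
    (hmin : ∀ B', B' ⊂ B → ¬ ∀ V, MemVa S a V → ∃ b ∈ B', b ∈ V) :
    S.att B a := by
  have hsub : ∃ A, S.att A a ∧ A ⊆ B := by
    by_contra hc
    push_neg at hc
    have hU : HitsAtt S a (S.args \ B) := by
      intro A hA
      obtain ⟨x, hxA, hxB⟩ := Finset.not_subset.1 (hc A hA)
      exact ⟨x, hxA, Finset.mem_sdiff.2 ⟨(hS.1 A a hA).2.1 hxA, hxB⟩⟩
    obtain ⟨W, hWsub, hQW, hWmin⟩ := exists_min (Q := HitsAtt S a) _ hU
    obtain ⟨b, hbB, hbW⟩ := hD W ⟨hWsub.trans (Finset.sdiff_subset), hQW, hWmin⟩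
    exact (Finset.mem_sdiff.1 (hWsub hbW)).2 hbB
  obtain ⟨A, hA, hAB⟩ := hsub
  rcases eq_or_ne A B with rfl | hne
  · exact hA
  · exact absurd (dtrans_of_att S hA) (hmin A (Finset.ssubset_iff_subset_ne.2 ⟨hAB, hne⟩))

theorem stmt12 (S : SETAF α) (hS : S.Wf) : setafOf (nlpOf S) = S := by
  have hargs : argsOf (nlpOf S) = S.args := argsOf_nlpOf S hS
  have hatt : ∀ B a, (setafOf (nlpOf S)).att B a ↔ S.att B a := by
    intro B a
    simp only [setafOf, hargs]
    constructor
    · rintro ⟨hBa, ha, hHV, hHVmin⟩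
      refine claim3 S hS ((hitsVul_iff S B ha).1 hHV) ?_
      intro B' hB' hD
      exact hHVmin B' hB' ((hitsVul_iff S B' ha).2 hD)
    · intro hB
      have ha : a ∈ S.args := (hS.1 B a hB).2.2
      refine ⟨(hS.1 B a hB).2.1, ha, (hitsVul_iff S B ha).2 (dtrans_of_att S hB), ?_⟩
      intro B' hB' hHV
      exact claim2 S hS hB B' hB' ((hitsVul_iff S B' ha).1 hHV)
  have : setafOf (nlpOf S) = ⟨S.args, S.att⟩ := by
    have h1 : (setafOf (nlpOf S)).args = S.args := hargs
    have h2 : (setafOf (nlpOf S)).att = S.att := by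
      funext B a; exact propext (hatt B a)
    cases h : setafOf (nlpOf S) with
    | mk A att => rw [h] at h1 h2; simp only [SETAF.mk.injEq]; exact ⟨h1, h2⟩
  exact this
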